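/- arXiv:2603.00671 — 4 statements merged into one kernel-verified Lean document; each statement's English description precedes it below -/
import Mathlib

section
/- Let p and l be real constants with l + 2 > 0 and p < l + 3/2. Then there exists a constant C > 0 such that for every function φ ∈ C^{2+ν}(ℝ) with 0 < ν < 1, one has sup_{x∈ℝ} |φ'(x)| ≤ C (∫_ℝ |φ'(x)|^{2(l-p+2)} dx)^{1/(2(l+2))} (∫_ℝ |φ'(x)|^{2(p-1)} |φ''(x)|^2 dx)^{1/(2(l+2))}, provided both integrals on the right-hand side are finite. -/
/-!
Write `s = l + 2`, `u = φ'`, `w = φ''`. Where `u ≠ 0`, the function `|u|^s` is differentiable with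
derivative at most `s |u|^(s-1) |w|`. Integrating this from the last zero of `u` before `x`, or from
a point far to the left where `|u|` is small (such points exist since `|u|^(2(l-p+2))` is
integrable and `l - p + 2 > 0`), gives `|u x|^s ≤ s ∫ |u|^(s-1) |w|`. Splitting
`|u|^(s-1) |w| = |u|^(l-p+2) · (|u|^(p-1) |w|)` and applying Cauchy–Schwarz yields the bound with
`C = s^(1/s)`.
-/

open MeasureTheory Real Set

theorem HasDerivAt.rpow_abs {u : ℝ → ℝ} {u' x : ℝ} (s : ℝ) (hu : HasDerivAt u u' x)
    (hx : u x ≠ 0) :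
    HasDerivAt (fun y => |u y| ^ s) (SignType.sign (u x) * u' * s * |u x| ^ (s - 1)) x :=
  ((hasDerivAt_abs hx).comp x hu).rpow_const (Or.inl (abs_ne_zero.2 hx))

theorem sign_mul_le_abs {y : ℝ} (hy : y ≠ 0) (w : ℝ) : (SignType.sign y : ℝ) * w ≤ |w| := by
  rcases lt_or_gt_of_ne hy with h | h <;> simp [h, le_abs_self, neg_le_abs]

theorem rpow_abs_sub_rpow_abs_le_integral {u w G : ℝ → ℝ} {s a b : ℝ} (hs : 0 ≤ s)
    (hab : a ≤ b) (hu : ∀ x, HasDerivAt u (w x) x) (hne : ∀ x ∈ Ioo a b, u x ≠ 0)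
    (hG : ∀ x ∈ Ioo a b, |u x| ^ (s - 1) * |w x| ≤ G x) (hGi : IntegrableOn G (Icc a b)) :
    |u b| ^ s - |u a| ^ s ≤ s * ∫ x in a..b, G x := by
  have hcont : Continuous u := continuous_iff_continuousAt.2 fun x => (hu x).continuousAt
  rw [← intervalIntegral.integral_const_mul]
  refine intervalIntegral.sub_le_integral_of_hasDeriv_right_of_le hab
    (hcont.abs.rpow_const fun _ => Or.inr hs).continuousOn
    (fun x hx => ((hu x).rpow_abs s (hne x hx)).hasDerivWithinAt) (hGi.const_mul s)
    fun x hx => ?_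
  calc (SignType.sign (u x) : ℝ) * w x * s * |u x| ^ (s - 1)
      ≤ |w x| * s * |u x| ^ (s - 1) := by
        gcongr
        exact sign_mul_le_abs (hne x hx) _
    _ = s * (|u x| ^ (s - 1) * |w x|) := by ring
    _ ≤ s * G x := by gcongr; exact hG x hx

/-- `a` is the last zero of `u` in `[y, b]`, or `y` if there is none. -/
theorem exists_abs_le_forall_Ioo_ne_zero {u : ℝ → ℝ} (hu : Continuous u) {y b : ℝ}
    (hyb : y ≤ b) : ∃ a ∈ Icc y b, |u a| ≤ |u y| ∧ ∀ t ∈ Ioo a b, u t ≠ 0 := by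
  set S := Icc y b ∩ ({y} ∪ u ⁻¹' {0})
  have hS : IsCompact S :=
    isCompact_Icc.inter_right (isClosed_singleton.union (isClosed_singleton.preimage hu))
  obtain ⟨haI, ha⟩ : sSup S ∈ S := hS.sSup_mem ⟨y, ⟨le_rfl, hyb⟩, Or.inl rfl⟩
  refine ⟨sSup S, haI, ?_, fun t ht hut => ?_⟩
  · rcases ha with ha | ha
    · rw [ha]
    · simp only [mem_preimage, mem_singleton_iff] at ha
      simp [ha]
  · have hyt : y ≤ t := haI.1.trans ht.1.le
    have : t ∈ S := ⟨⟨hyt, ht.2.le⟩, Or.inr hut⟩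
    exact (le_csSup hS.bddAbove this).not_gt ht.1

theorem rpow_abs_le_rpow_abs_add_integral {u w G : ℝ → ℝ} {s y b : ℝ} (hs : 0 < s)
    (hyb : y ≤ b) (hu : ∀ x, HasDerivAt u (w x) x)
    (hG : ∀ x, u x ≠ 0 → |u x| ^ (s - 1) * |w x| ≤ G x) (hG0 : 0 ≤ G) (hGi : Integrable G) :
    |u b| ^ s ≤ |u y| ^ s + s * ∫ x, G x := by
  have hcont : Continuous u := continuous_iff_continuousAt.2 fun x => (hu x).continuousAt
  obtain ⟨a, ⟨hya, hab⟩, hua, hne⟩ := exists_abs_le_forall_Ioo_ne_zero hcont hyb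
  have hFTC := rpow_abs_sub_rpow_abs_le_integral hs.le hab hu hne
    (fun x hx => hG x (hne x hx)) hGi.integrableOn
  have hsub : ∫ x in a..b, G x ≤ ∫ x, G x := by
    rw [intervalIntegral.integral_of_le hab]
    exact setIntegral_le_integral hGi (Filter.Eventually.of_forall hG0)
  have hua_s : |u a| ^ s ≤ |u y| ^ s := by gcongr
  linarith [mul_le_mul_of_nonneg_left hsub hs.le]

theorem MeasureTheory.Integrable.exists_lt_norm_lt {E : Type*} [NormedAddCommGroup E] {f : ℝ → E}
    (hf : Integrable f) (b : ℝ) {ε : ℝ} (hε : 0 < ε) : ∃ y < b, ‖f y‖ < ε := by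
  by_contra! h
  have hle : volume (Iio b) ≤ volume {y | ε ≤ ‖f y‖} := measure_mono fun y hy => h y hy
  rw [Real.volume_Iio] at hle
  exact (hf.measure_norm_ge_lt_top hε).ne (top_le_iff.1 hle)

theorem rpow_abs_le_integral {u w G : ℝ → ℝ} {s q : ℝ} (hs : 0 < s) (hq : 0 < q)
    (hu : ∀ x, HasDerivAt u (w x) x) (huq : Integrable fun x => |u x| ^ q)
    (hG : ∀ x, u x ≠ 0 → |u x| ^ (s - 1) * |w x| ≤ G x) (hG0 : 0 ≤ G) (hGi : Integrable G)
    (b : ℝ) : |u b| ^ s ≤ s * ∫ x, G x := by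
  refine le_of_forall_pos_lt_add fun η hη => ?_
  have hη' : 0 ≤ η ^ s⁻¹ := by positivity
  obtain ⟨y, hyb, hy⟩ := huq.exists_lt_norm_lt b (rpow_pos_of_pos (by positivity : 0 < η ^ s⁻¹) q)
  rw [Real.norm_of_nonneg (by positivity), rpow_lt_rpow_iff (abs_nonneg _) hη' hq] at hy
  have hys : |u y| ^ s < η := by
    simpa [rpow_inv_rpow hη.le hs.ne'] using rpow_lt_rpow (abs_nonneg _) hy hs
  linarith [rpow_abs_le_rpow_abs_add_integral hs hyb.le hu hG hG0 hGi]

theorem rpow_abs_sq (x a : ℝ) : (|x| ^ a) ^ 2 = |x| ^ (2 * a) := by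
  rw [← rpow_natCast, ← rpow_mul (abs_nonneg x), mul_comm]; norm_num

theorem integrable_mul_and_integral_mul_le {u w : ℝ → ℝ} {a b : ℝ} (hu : Measurable u)
    (hw : Measurable w) (hA : Integrable fun x => |u x| ^ (2 * a))
    (hB : Integrable fun x => |u x| ^ (2 * b) * |w x| ^ (2 : ℝ)) :
    Integrable (fun x => |u x| ^ a * (|u x| ^ b * |w x|)) ∧
      ∫ x, |u x| ^ a * (|u x| ^ b * |w x|) ≤
        (∫ x, |u x| ^ (2 * a)) ^ (1 / 2 : ℝ) *
          (∫ x, |u x| ^ (2 * b) * |w x| ^ (2 : ℝ)) ^ (1 / 2 : ℝ) := by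
  set f := fun x => |u x| ^ a
  set g := fun x => |u x| ^ b * |w x|
  have hf_sq : ∀ x, f x ^ 2 = |u x| ^ (2 * a) := fun x => rpow_abs_sq _ _
  have hg_sq : ∀ x, g x ^ 2 = |u x| ^ (2 * b) * |w x| ^ (2 : ℝ) := fun x => by
    simp only [g, mul_pow, rpow_abs_sq, rpow_two]
  have hf : MemLp f 2 := (memLp_two_iff_integrable_sq (by fun_prop)).2 (hA.congr (ae_of_all _ fun x => (hf_sq x).symm))
  have hg : MemLp g 2 := (memLp_two_iff_integrable_sq (by fun_prop)).2 (hB.congr (ae_of_all _ fun x => (hg_sq x).symm))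
  refine ⟨hf.integrable_mul hg, ?_⟩
  have hCS := integral_mul_le_Lp_mul_Lq_of_nonneg Real.HolderConjugate.two_two
    (ae_of_all _ fun x => show 0 ≤ f x by positivity)
    (ae_of_all _ fun x => show 0 ≤ g x by positivity)
    (by simpa using hf) (by simpa using hg)
  simpa only [rpow_two, hf_sq, hg_sq] using hCS

theorem le_of_rpow_le_mul_sqrt {x c A B s : ℝ} (hs : 0 < s) (hx : 0 ≤ x) (hc : 0 ≤ c)
    (hA : 0 ≤ A) (hB : 0 ≤ B) (h : x ^ s ≤ c * (A ^ (1 / 2 : ℝ) * B ^ (1 / 2 : ℝ))) :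
    x ≤ c ^ (1 / s) * A ^ (1 / (2 * s)) * B ^ (1 / (2 * s)) := by
  have hexp : (1 / 2 : ℝ) * (1 / s) = 1 / (2 * s) := by field_simp
  calc x = (x ^ s) ^ (1 / s) := by rw [← rpow_mul hx, mul_one_div_cancel hs.ne', rpow_one]
    _ ≤ (c * (A ^ (1 / 2 : ℝ) * B ^ (1 / 2 : ℝ))) ^ (1 / s) := by gcongr
    _ = c ^ (1 / s) * A ^ (1 / (2 * s)) * B ^ (1 / (2 * s)) := by
      rw [mul_rpow hc (by positivity), mul_rpow (by positivity) (by positivity),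
        ← rpow_mul hA, ← rpow_mul hB, hexp, mul_assoc]

/-- Lemma 2.1: weighted interpolation inequality for `sup |φ'|`. -/
theorem stmt0 (p l : ℝ) (hl : l + 2 > 0) (hp : p < l + 3 / 2) :
    ∃ C > 0, ∀ (φ : ℝ → ℝ) (ν : ℝ), 0 < ν → ν < 1 →
      ContDiff ℝ 2 φ →
      (∃ K : NNReal, HolderWith K ν.toNNReal (deriv (deriv φ))) →
      Integrable (fun x => |deriv φ x| ^ (2 * (l - p + 2))) →
      Integrable (fun x => |deriv φ x| ^ (2 * (p - 1)) * |deriv (deriv φ) x| ^ (2 : ℝ)) →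
      ∀ x : ℝ, |deriv φ x| ≤
        C * (∫ x : ℝ, |deriv φ x| ^ (2 * (l - p + 2))) ^ (1 / (2 * (l + 2))) *
          (∫ x : ℝ, |deriv φ x| ^ (2 * (p - 1)) * |deriv (deriv φ) x| ^ (2 : ℝ)) ^
            (1 / (2 * (l + 2))) := by
  refine ⟨(l + 2) ^ (1 / (l + 2)), by positivity, fun φ _ _ _ hφ _ hA hB x₀ => ?_⟩
  have hu : ∀ x, HasDerivAt (deriv φ) (deriv (deriv φ) x) x := fun x =>
    ((hφ.deriv' (n := 1)).differentiable one_ne_zero x).hasDerivAt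
  obtain ⟨hGi, hCS⟩ := integrable_mul_and_integral_mul_le (measurable_deriv φ)
    (measurable_deriv (deriv φ)) hA hB
  have hG : ∀ x, deriv φ x ≠ 0 → |deriv φ x| ^ (l + 2 - 1) * |deriv (deriv φ) x| ≤
      |deriv φ x| ^ (l - p + 2) * (|deriv φ x| ^ (p - 1) * |deriv (deriv φ) x|) := fun x hx => by
    rw [← mul_assoc, ← rpow_add (abs_pos.2 hx), show l - p + 2 + (p - 1) = l + 2 - 1 by ring]
  have hkey := rpow_abs_le_integral hl (by linarith : 0 < 2 * (l - p + 2)) hu hA hG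
    (fun x => by positivity) hGi x₀
  exact le_of_rpow_le_mul_sqrt hl (abs_nonneg _) hl.le (integral_nonneg fun x => by positivity)
    (integral_nonneg fun x => by positivity) (hkey.trans (by gcongr))
end

section
/- Local version of Gronwall's inequality: Let T, T₀, σ, c₀ be positive constants, h ∈ L¹(T₀,T) with h ≥ 0 a.e. on [T₀,T], and f ∈ C¹[T₀,T] with f ≥ 0 satisfying f'(t) ≤ h(t) + c₀ f(t)^{1+σ}. Define H(t) = f(T₀) + ∫_{T₀}^t h(s) ds. Suppose there exists t₀ ∈ [T₀,T] with σ c₀ H(t₀)^σ (t₀ - T₀) < 1. Then f(t) ≤ H(t) (1 - σ c₀ H(t)^σ (t - T₀))^{-1/σ} for all t ∈ [T₀, t₀]. -/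
/-!
Integrating the differential inequality gives `f s ≤ H t + c₀ ∫_{T₀}^s f^{1+σ}` for `s ≤ t`, since
`H` is nondecreasing. For `K > 0` the right-hand side `g` of such an integral inequality satisfies
`g' ≤ c g^{1+σ}`, so `g^{-σ} + σ c s` is nondecreasing (Bihari's argument); this bounds `g`, hence
`f`, by the solution of `y' = c y^{1+σ}`, `y(T₀) = K`. The case `K = H t ≥ 0` follows by letting
`K ↓ H t`, the explicit bound being continuous in `K`.
-/

open MeasureTheory Set Filter Topology

/-- The solution at time `x` of `y' = c y^{1+σ}`, `y(0) = K`, as long as `σ c K^σ x < 1`. -/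
noncomputable def bihariBound (σ c K x : ℝ) : ℝ :=
  K * (1 - σ * c * K ^ σ * x) ^ (-(1 / σ))

theorem continuousAt_bihariBound {σ c K x : ℝ} (hσ : 0 ≤ σ)
    (h : 0 < 1 - σ * c * K ^ σ * x) :
    ContinuousAt (fun K => bihariBound σ c K x) K := by
  have hpow : ContinuousAt (fun K : ℝ => K ^ σ) K :=
    Real.continuousAt_rpow_const _ _ (Or.inr hσ)
  exact continuousAt_id.mul <|
    ((continuousAt_const.sub ((continuousAt_const.mul hpow).mul continuousAt_const)).rpow_const
      (Or.inl h.ne'))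

theorem le_bihariBound_of_rpow_neg_le {σ c K x y : ℝ} (hσ : 0 < σ) (hK : 0 < K) (hy : 0 < y)
    (hsmall : 0 < 1 - σ * c * K ^ σ * x) (h : K ^ (-σ) - σ * c * x ≤ y ^ (-σ)) :
    y ≤ bihariBound σ c K x := by
  have hfactor : K ^ (-σ) - σ * c * x = K ^ (-σ) * (1 - σ * c * K ^ σ * x) := by
    have : K ^ (-σ) * K ^ σ = 1 := by
      rw [Real.rpow_neg hK.le, inv_mul_cancel₀ (Real.rpow_pos_of_pos hK σ).ne']
    linear_combination (σ * c * x) * this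
  have hexp : -(1 / σ) = (-σ)⁻¹ := by rw [one_div, neg_inv]
  have hσ' : -σ ≠ 0 := neg_ne_zero.2 hσ.ne'
  have hKσ : 0 < K ^ (-σ) := Real.rpow_pos_of_pos hK _
  calc y = (y ^ (-σ)) ^ (-(1 / σ)) := by rw [hexp, Real.rpow_rpow_inv hy.le hσ']
    _ ≤ (K ^ (-σ) - σ * c * x) ^ (-(1 / σ)) :=
      Real.rpow_le_rpow_of_nonpos (hfactor ▸ mul_pos hKσ hsmall) h
        (neg_nonpos.2 (one_div_pos.2 hσ).le)
    _ = bihariBound σ c K x := by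
      rw [hfactor, Real.mul_rpow hKσ.le hsmall.le, hexp, Real.rpow_rpow_inv hK.le hσ', ← hexp]
      rfl

theorem le_bihariBound_of_hasDerivAt_le {g g' : ℝ → ℝ} {a b σ c : ℝ} (hσ : 0 < σ) (hab : a ≤ b)
    (hg : ContinuousOn g (Icc a b)) (hg_pos : ∀ x ∈ Icc a b, 0 < g x)
    (hderiv : ∀ x ∈ Ioo a b, HasDerivAt g (g' x) x)
    (hg' : ∀ x ∈ Ioo a b, g' x ≤ c * g x ^ (1 + σ))
    (hsmall : 0 < 1 - σ * c * g a ^ σ * (b - a)) :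
    g b ≤ bihariBound σ c (g a) (b - a) := by
  set φ : ℝ → ℝ := fun s => g s ^ (-σ) + σ * c * s
  have hφ_deriv : ∀ x ∈ Ioo a b, HasDerivAt φ (g' x * (-σ) * g x ^ (-σ - 1) + σ * c) x :=
    fun x hx => ((hderiv x hx).rpow_const (Or.inl (hg_pos x (Ioo_subset_Icc_self hx)).ne')).add
      (by simpa using (hasDerivAt_id x).const_mul (σ * c))
  have hφ_deriv_nonneg : ∀ x ∈ Ioo a b, 0 ≤ g' x * (-σ) * g x ^ (-σ - 1) + σ * c := by
    intro x hx
    have hgx := hg_pos x (Ioo_subset_Icc_self hx)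
    have hcancel : g x ^ (1 + σ) * g x ^ (-σ - 1) = 1 := by
      rw [← Real.rpow_add hgx, show 1 + σ + (-σ - 1) = 0 by ring, Real.rpow_zero]
    have : g' x * g x ^ (-σ - 1) ≤ c := by
      simpa [mul_assoc, hcancel] using
        mul_le_mul_of_nonneg_right (hg' x hx) (Real.rpow_nonneg hgx.le (-σ - 1))
    nlinarith
  have hφ_mono : MonotoneOn φ (Icc a b) := by
    refine monotoneOn_of_hasDerivWithinAt_nonneg (convex_Icc a b)
      (f' := fun x => g' x * (-σ) * g x ^ (-σ - 1) + σ * c)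
      ((hg.rpow_const fun x hx => Or.inl (hg_pos x hx).ne').add (by fun_prop)) ?_ ?_
    · intro x hx
      rw [interior_Icc] at hx
      exact (hφ_deriv x hx).hasDerivWithinAt
    · intro x hx
      rw [interior_Icc] at hx
      exact hφ_deriv_nonneg x hx
  have hφ_ab : φ a ≤ φ b := hφ_mono (left_mem_Icc.2 hab) (right_mem_Icc.2 hab) hab
  refine le_bihariBound_of_rpow_neg_le hσ (hg_pos a (left_mem_Icc.2 hab))
    (hg_pos b (right_mem_Icc.2 hab)) hsmall ?_
  simp only [φ] at hφ_ab
  linarith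

theorem le_bihariBound_of_le_add_integral_of_pos {f : ℝ → ℝ} {a b σ c K : ℝ} (hσ : 0 < σ)
    (hc : 0 ≤ c) (hK : 0 < K) (hab : a ≤ b) (hf : ContinuousOn f (Icc a b))
    (hf_nonneg : ∀ x ∈ Icc a b, 0 ≤ f x)
    (hle : ∀ x ∈ Icc a b, f x ≤ K + c * ∫ u in a..x, f u ^ (1 + σ))
    (hsmall : 0 < 1 - σ * c * K ^ σ * (b - a)) :
    f b ≤ bihariBound σ c K (b - a) := by
  set g : ℝ → ℝ := fun x => K + c * ∫ u in a..x, f u ^ (1 + σ)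
  have hq : ContinuousOn (fun u => f u ^ (1 + σ)) (Icc a b) :=
    hf.rpow_const fun _ _ => Or.inr (by linarith)
  have hg_pos : ∀ x ∈ Icc a b, 0 < g x := fun x hx =>
    add_pos_of_pos_of_nonneg hK <| mul_nonneg hc <| intervalIntegral.integral_nonneg hx.1
      fun u hu => Real.rpow_nonneg (hf_nonneg u ⟨hu.1, hu.2.trans hx.2⟩) _
  have hg : ContinuousOn g (Icc a b) := by
    have := intervalIntegral.continuousOn_primitive_interval (μ := volume) (a := a) (b := b)
      (by rw [uIcc_of_le hab]; exact hq.integrableOn_Icc)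
    rw [uIcc_of_le hab] at this
    exact continuousOn_const.add (continuousOn_const.mul this)
  have hderiv : ∀ x ∈ Ioo a b, HasDerivAt g (c * f x ^ (1 + σ)) x := by
    intro x hx
    have hmem : Icc a b ∈ 𝓝 x := Icc_mem_nhds hx.1 hx.2
    refine ((intervalIntegral.integral_hasDerivAt_right ?_ ?_ ?_).const_mul c).const_add K
    · exact (hq.intervalIntegrable_of_Icc hab).mono_set
        (by rw [uIcc_of_le hab, uIcc_of_le hx.1.le]; exact Icc_subset_Icc le_rfl hx.2.le)
    · exact ⟨Icc a b, hmem, hq.aestronglyMeasurable measurableSet_Icc⟩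
    · exact (hq x (Ioo_subset_Icc_self hx)).continuousAt hmem
  have hg' : ∀ x ∈ Ioo a b, c * f x ^ (1 + σ) ≤ c * g x ^ (1 + σ) := fun x hx => by
    have hx' := Ioo_subset_Icc_self hx
    gcongr
    · exact hf_nonneg x hx'
    · exact hle x hx'
  have hga : g a = K := by simp [g]
  calc f b ≤ g b := hle b (right_mem_Icc.2 hab)
    _ ≤ bihariBound σ c (g a) (b - a) :=
      le_bihariBound_of_hasDerivAt_le hσ hab hg hg_pos hderiv hg' (hga ▸ hsmall)
    _ = bihariBound σ c K (b - a) := by rw [hga]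

theorem le_bihariBound_of_le_add_integral {f : ℝ → ℝ} {a b σ c K : ℝ} (hσ : 0 < σ)
    (hc : 0 ≤ c) (hK : 0 ≤ K) (hab : a ≤ b) (hf : ContinuousOn f (Icc a b))
    (hf_nonneg : ∀ x ∈ Icc a b, 0 ≤ f x)
    (hle : ∀ x ∈ Icc a b, f x ≤ K + c * ∫ u in a..x, f u ^ (1 + σ))
    (hsmall : 0 < 1 - σ * c * K ^ σ * (b - a)) :
    f b ≤ bihariBound σ c K (b - a) := by
  have hshift : Tendsto (fun ε => K + ε) (𝓝[>] 0) (𝓝 K) :=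
    tendsto_nhdsWithin_of_tendsto_nhds <| by simpa using (continuous_const_add K).tendsto 0
  have hsmall' : ∀ᶠ ε in 𝓝[>] 0, 0 < 1 - σ * c * (K + ε) ^ σ * (b - a) := by
    have : ContinuousAt (fun K : ℝ => 1 - σ * c * K ^ σ * (b - a)) K :=
      continuousAt_const.sub <| (continuousAt_const.mul
        (Real.continuousAt_rpow_const _ _ (Or.inr hσ.le))).mul continuousAt_const
    exact (this.tendsto.comp hshift).eventually (lt_mem_nhds hsmall)
  refine ge_of_tendsto ((continuousAt_bihariBound hσ.le hsmall).tendsto.comp hshift) ?_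
  filter_upwards [self_mem_nhdsWithin, hsmall'] with ε (hε : 0 < ε) hε'
  exact le_bihariBound_of_le_add_integral_of_pos hσ hc (by linarith) hab hf hf_nonneg
    (fun x hx => by linarith [hle x hx]) hε'

theorem le_add_integral_add_integral_rpow {f f' h : ℝ → ℝ} {a b c σ : ℝ} (hσ : 0 ≤ 1 + σ)
    (hab : a ≤ b) (hh : IntegrableOn h (Icc a b))
    (hf : ∀ x ∈ Icc a b, HasDerivWithinAt f (f' x) (Icc a b) x)
    (hf' : ∀ x ∈ Icc a b, f' x ≤ h x + c * f x ^ (1 + σ)) :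
    f b ≤ f a + (∫ x in a..b, h x) + c * ∫ x in a..b, f x ^ (1 + σ) := by
  have hf_cont : ContinuousOn f (Icc a b) := fun x hx => (hf x hx).continuousWithinAt
  have hq : ContinuousOn (fun x => f x ^ (1 + σ)) (Icc a b) :=
    hf_cont.rpow_const fun _ _ => Or.inr hσ
  have hint : IntervalIntegrable h volume a b :=
    (intervalIntegrable_iff_integrableOn_Icc_of_le hab).2 hh
  have hle := intervalIntegral.sub_le_integral_of_hasDeriv_right_of_le hab hf_cont
    (φ := fun x => h x + c * f x ^ (1 + σ))
    (fun x hx => (hf x (Ioo_subset_Icc_self hx)).mono_of_mem_nhdsWithin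
      (Icc_mem_nhdsGT_of_mem (Ioo_subset_Ico_self hx)))
    (hh.add (hq.integrableOn_Icc.const_mul c)) (fun x hx => hf' x (Ioo_subset_Icc_self hx))
  rw [intervalIntegral.integral_add hint ((hq.intervalIntegrable_of_Icc hab).const_mul c),
    intervalIntegral.integral_const_mul] at hle
  linarith

theorem monotoneOn_integral_of_ae_nonneg {h : ℝ → ℝ} {a b : ℝ} (hh : IntegrableOn h (Icc a b))
    (hh_nonneg : ∀ᵐ x ∂(volume.restrict (Icc a b)), 0 ≤ h x) :
    MonotoneOn (fun x => ∫ s in a..x, h s) (Icc a b) := by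
  intro x hx y hy hxy
  have hsub : Icc a y ⊆ Icc a b := Icc_subset_Icc le_rfl hy.2
  exact intervalIntegral.integral_mono_interval le_rfl hx.1 hxy
    (ae_restrict_of_ae_restrict_of_subset (Ioc_subset_Icc_self.trans hsub) hh_nonneg)
    ((intervalIntegrable_iff_integrableOn_Icc_of_le (hx.1.trans hxy)).2 (hh.mono_set hsub))

theorem stmt1_general (T T₀ σ c₀ : ℝ) (hσ : 0 < σ) (hc₀ : 0 < c₀)
    (h f f' : ℝ → ℝ)
    (hh_int : IntegrableOn h (Icc T₀ T))
    (hh_nonneg : ∀ᵐ t ∂(volume.restrict (Icc T₀ T)), 0 ≤ h t)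
    (hf_deriv : ∀ t ∈ Icc T₀ T, HasDerivWithinAt f (f' t) (Icc T₀ T) t)
    (hf_nonneg : ∀ t ∈ Icc T₀ T, 0 ≤ f t)
    (hineq : ∀ t ∈ Icc T₀ T, f' t ≤ h t + c₀ * f t ^ (1 + σ))
    (H : ℝ → ℝ) (hH : ∀ t, H t = f T₀ + ∫ s in T₀..t, h s)
    (t₀ : ℝ) (ht₀ : t₀ ∈ Icc T₀ T)
    (hsmall : σ * c₀ * H t₀ ^ σ * (t₀ - T₀) < 1) :
    ∀ t ∈ Icc T₀ t₀, f t ≤ H t * (1 - σ * c₀ * H t ^ σ * (t - T₀)) ^ (-(1 / σ)) := by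
  intro t ht
  have hT₀ : T₀ ∈ Icc T₀ T := left_mem_Icc.2 (ht₀.1.trans ht₀.2)
  have htT : t ∈ Icc T₀ T := ⟨ht.1, ht.2.trans ht₀.2⟩
  have hsub : Icc T₀ t ⊆ Icc T₀ T := Icc_subset_Icc le_rfl htT.2
  have hH_mono : MonotoneOn H (Icc T₀ T) := fun x hx y hy hxy => by
    rw [hH x, hH y]
    exact (add_le_add_iff_left _).2 (monotoneOn_integral_of_ae_nonneg hh_int hh_nonneg hx hy hxy)
  have hH_nonneg : 0 ≤ H t :=
    (by simp [hH, hf_nonneg T₀ hT₀] : 0 ≤ H T₀).trans (hH_mono hT₀ htT ht.1)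
  refine le_bihariBound_of_le_add_integral hσ hc₀.le hH_nonneg ht.1
    (fun s hs => (hf_deriv s (hsub hs)).continuousWithinAt.mono hsub)
    (fun s hs => hf_nonneg s (hsub hs)) (fun s hs => ?_) ?_
  · have hsT : Icc T₀ s ⊆ Icc T₀ T := Icc_subset_Icc le_rfl (hsub hs).2
    have hf_s := le_add_integral_add_integral_rpow (by linarith) hs.1 (hh_int.mono_set hsT)
      (fun x hx => (hf_deriv x (hsT hx)).mono hsT) (fun x hx => hineq x (hsT hx))
    linarith [hH s, hH_mono (hsub hs) htT hs.2]
  · have : σ * c₀ * H t ^ σ * (t - T₀) ≤ σ * c₀ * H t₀ ^ σ * (t₀ - T₀) := by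
      have hHt := hH_mono htT ht₀ ht.2
      have hHt₀ : 0 ≤ H t₀ := hH_nonneg.trans hHt
      have htT₀ : 0 ≤ t - T₀ := sub_nonneg.2 ht.1
      gcongr
      exact ht.2
    linarith

/-- Lemma 2.2: local version of Gronwall's inequality. -/
theorem stmt1 (T T₀ σ c₀ : ℝ) (hT₀ : 0 < T₀) (hTT : T₀ < T) (hσ : 0 < σ) (hc₀ : 0 < c₀)
    (h f f' : ℝ → ℝ)
    (hh_int : IntegrableOn h (Icc T₀ T))
    (hh_nonneg : ∀ᵐ t ∂(volume.restrict (Icc T₀ T)), 0 ≤ h t)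
    (hf_deriv : ∀ t ∈ Icc T₀ T, HasDerivWithinAt f (f' t) (Icc T₀ T) t)
    (hf'_cont : ContinuousOn f' (Icc T₀ T))
    (hf_nonneg : ∀ t ∈ Icc T₀ T, 0 ≤ f t)
    (hineq : ∀ t ∈ Icc T₀ T, f' t ≤ h t + c₀ * f t ^ (1 + σ))
    (H : ℝ → ℝ) (hH : ∀ t, H t = f T₀ + ∫ s in T₀..t, h s)
    (t₀ : ℝ) (ht₀ : t₀ ∈ Icc T₀ T)
    (hsmall : σ * c₀ * H t₀ ^ σ * (t₀ - T₀) < 1) :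
    ∀ t ∈ Icc T₀ t₀, f t ≤ H t * (1 - σ * c₀ * H t ^ σ * (t - T₀)) ^ (-(1 / σ)) :=
  stmt1_general T T₀ σ c₀ hσ hc₀ h f f' hh_int hh_nonneg hf_deriv hf_nonneg hineq H hH t₀ ht₀ hsmall
end

section
/- Let q ∈ (1,2) and set β = (q−1)²/(2(q+1)). For any fixed η > 1 and integer k > 2, one has 1 / ( (k − η^{−β})^{(q−1)/(q+1)} + ((q−1)/(q+1)) (η^{β})^{4q/((q−1)(q+1))} k^{(q+1)/(q−1)} (η^{β} k − 1)^{2q/(q+1)} )^{(q+1)/(q(q−1))} ≥ ((q+1)/(2q))^{(q+1)/(q(q−1))} · 1 / ( k^{1/q} (1 + k^{(q²+4q−1)/(q−1)²} (η^{β})^{2(q+1)/(q−1)²}) ). -/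
/-!
Put `E = η^β ≥ 1`, `K = k ≥ 3`, `s = q(q-1)/(q+1)`, `u = 2q/(q-1)`; let `A` be the bracket on
the right and `D = K^{1/q} (1 + X)` the denominator on the left. Taking `s`-th powers, it
suffices to show `A ≤ (2q/(q+1)) D^s`. Dropping `-E⁻¹` and `-1`, the powers of `E` and `K` in `A`
combine to `A ≤ K^{(q-1)/(q+1)} (1 + (EK)^u)`, while `D^s = K^{(q-1)/(q+1)} Y` with
`Y = (1 + X)^s ≥ X^s ≥ (EK)^u`. Finally `Y ≥ 3^u ≥ 1 + 2u ≥ (q+1)/(q-1)` by Bernoulli, so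
`1 + (EK)^u ≤ Y + ((q-1)/(q+1)) Y = (2q/(q+1)) Y`.
-/

open Real

lemma one_div_rpow_le_of_le_mul_rpow {A D c s p : ℝ} (hA : 0 < A) (hD : 0 < D) (hc : 0 < c)
    (hp : 0 ≤ p) (hsp : s * p = 1) (h : A ≤ c * D ^ s) :
    c⁻¹ ^ p * (1 / D) ≤ 1 / A ^ p := by
  have hAp : A ^ p ≤ c ^ p * D :=
    calc A ^ p ≤ (c * D ^ s) ^ p := rpow_le_rpow hA.le h hp
      _ = c ^ p * D := by
        rw [mul_rpow hc.le (rpow_nonneg hD.le _), ← rpow_mul hD.le, hsp, rpow_one]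
  rw [inv_rpow hc.le, ← div_eq_inv_mul, div_div]
  exact one_div_le_one_div_of_le (rpow_pos_of_pos hA p) (hAp.trans_eq (mul_comm _ _))

section

variable {q : ℝ}

lemma add_one_div_sub_one_le_rpow_of_three_le (hq : 1 < q) {x : ℝ} (hx : 3 ≤ x) :
    (q + 1) / (q - 1) ≤ x ^ (2 * q / (q - 1)) := by
  have hq' : 0 < q - 1 := by linarith
  have hu : 1 ≤ 2 * q / (q - 1) := by rw [le_div_iff₀ hq']; linarith
  calc (q + 1) / (q - 1) ≤ 1 + 2 * (2 * q / (q - 1)) := by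
        rw [div_le_iff₀ hq', add_mul, mul_assoc, div_mul_cancel₀ _ hq'.ne']; nlinarith
    _ ≤ (1 + 2) ^ (2 * q / (q - 1)) := by
        rw [mul_comm]; exact one_add_mul_self_le_rpow_one_add (by norm_num) hu
    _ ≤ x ^ (2 * q / (q - 1)) := rpow_le_rpow (by norm_num) (by linarith) (by linarith)

lemma rpow_mul_rpow_mul_rpow_eq (hq : 1 < q) {E K : ℝ} (hE : 0 < E) (hK : 0 < K) :
    E ^ (4 * q / ((q - 1) * (q + 1))) * K ^ ((q + 1) / (q - 1)) * (E * K) ^ (2 * q / (q + 1)) =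
      K ^ ((q - 1) / (q + 1)) * (E * K) ^ (2 * q / (q - 1)) := by
  have hq' : q - 1 ≠ 0 := by linarith
  have hq'' : q + 1 ≠ 0 := by linarith
  have hK_exp : (q + 1) / (q - 1) = (q - 1) / (q + 1) + 4 * q / ((q - 1) * (q + 1)) := by
    field_simp; ring
  have hEK_exp : 2 * q / (q - 1) = 4 * q / ((q - 1) * (q + 1)) + 2 * q / (q + 1) := by
    field_simp; ring
  rw [hK_exp, hEK_exp, rpow_add hK, rpow_add (mul_pos hE hK), mul_rpow hE.le hK.le,
    mul_rpow hE.le hK.le]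
  ring

lemma bracket_le (hq : 1 < q) {E K : ℝ} (hE : 1 ≤ E) (hK : 1 ≤ K) :
    (K - E⁻¹) ^ ((q - 1) / (q + 1)) +
        (q - 1) / (q + 1) * E ^ (4 * q / ((q - 1) * (q + 1))) * K ^ ((q + 1) / (q - 1)) *
          (E * K - 1) ^ (2 * q / (q + 1)) ≤
      K ^ ((q - 1) / (q + 1)) * (1 + (E * K) ^ (2 * q / (q - 1))) := by
  have hE0 : 0 < E := by linarith
  have hK0 : 0 < K := by linarith
  have hEK : 1 ≤ E * K := by nlinarith
  have hEinv : E⁻¹ ≤ 1 := inv_le_one_of_one_le₀ hE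
  have hfrac : (q - 1) / (q + 1) ≤ 1 := by rw [div_le_one (by linarith)]; linarith
  have first : (K - E⁻¹) ^ ((q - 1) / (q + 1)) ≤ K ^ ((q - 1) / (q + 1)) :=
    rpow_le_rpow (by linarith) (by linarith [inv_pos.mpr hE0])
      (div_nonneg (by linarith) (by linarith))
  have second :
      (q - 1) / (q + 1) * E ^ (4 * q / ((q - 1) * (q + 1))) * K ^ ((q + 1) / (q - 1)) *
        (E * K - 1) ^ (2 * q / (q + 1)) ≤
      K ^ ((q - 1) / (q + 1)) * (E * K) ^ (2 * q / (q - 1)) := by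
    rw [← rpow_mul_rpow_mul_rpow_eq hq hE0 hK0]
    calc _ ≤ 1 * E ^ (4 * q / ((q - 1) * (q + 1))) * K ^ ((q + 1) / (q - 1)) *
          (E * K) ^ (2 * q / (q + 1)) := by
          gcongr ?_ * _ * _ * (?_ ^ _)
          all_goals linarith
      _ = _ := by rw [one_mul]
  linarith

lemma mul_rpow_le_one_add_rpow (hq : 1 < q) {E K : ℝ} (hE : 0 < E) (hK : 1 ≤ K) :
    (E * K) ^ (2 * q / (q - 1)) ≤
      (1 + K ^ ((q ^ 2 + 4 * q - 1) / (q - 1) ^ 2) * E ^ (2 * (q + 1) / (q - 1) ^ 2)) ^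
        (q * (q - 1) / (q + 1)) := by
  have hK0 : 0 < K := by linarith
  have hq' : 0 < q - 1 := by linarith
  have hE_exp : 2 * (q + 1) / (q - 1) ^ 2 * (q * (q - 1) / (q + 1)) = 2 * q / (q - 1) := by
    field_simp
  have hK_exp :
      2 * q / (q - 1) ≤ (q ^ 2 + 4 * q - 1) / (q - 1) ^ 2 * (q * (q - 1) / (q + 1)) := by
    -- after clearing denominators the two sides differ by `q (q - 1)^3 (q + 3)`
    rw [div_mul_div_comm, div_le_div_iff₀ (by positivity) (by positivity)]
    nlinarith [mul_pos (mul_pos (by linarith : (0:ℝ) < q) (pow_pos hq' 3))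
      (by linarith : (0:ℝ) < q + 3)]
  calc (E * K) ^ (2 * q / (q - 1)) = K ^ (2 * q / (q - 1)) * E ^ (2 * q / (q - 1)) := by
        rw [mul_rpow hE.le hK0.le, mul_comm]
    _ ≤ K ^ ((q ^ 2 + 4 * q - 1) / (q - 1) ^ 2 * (q * (q - 1) / (q + 1))) *
          E ^ (2 * (q + 1) / (q - 1) ^ 2 * (q * (q - 1) / (q + 1))) := by
        rw [hE_exp]; gcongr
    _ = (K ^ ((q ^ 2 + 4 * q - 1) / (q - 1) ^ 2) * E ^ (2 * (q + 1) / (q - 1) ^ 2)) ^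
          (q * (q - 1) / (q + 1)) := by
        rw [mul_rpow (by positivity) (by positivity), rpow_mul hK0.le, rpow_mul hE.le]
    _ ≤ _ := by gcongr; linarith

lemma bracket_pos (hq : 1 < q) {E K : ℝ} (hE : 1 ≤ E) (hK : 1 < K) :
    0 < (K - E⁻¹) ^ ((q - 1) / (q + 1)) +
        (q - 1) / (q + 1) * E ^ (4 * q / ((q - 1) * (q + 1))) * K ^ ((q + 1) / (q - 1)) *
          (E * K - 1) ^ (2 * q / (q + 1)) := by
  have hEinv : E⁻¹ ≤ 1 := inv_le_one_of_one_le₀ hE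
  have hfrac : 0 ≤ (q - 1) / (q + 1) := div_nonneg (by linarith) (by linarith)
  refine add_pos_of_pos_of_nonneg (rpow_pos_of_pos (by linarith) _) ?_
  have := rpow_nonneg (by nlinarith : (0 : ℝ) ≤ E * K - 1) (2 * q / (q + 1))
  have := rpow_nonneg (by linarith : (0 : ℝ) ≤ E) (4 * q / ((q - 1) * (q + 1)))
  have := rpow_nonneg (by linarith : (0 : ℝ) ≤ K) ((q + 1) / (q - 1))
  positivity

lemma bracket_le_mul_rpow (hq : 1 < q) {E K : ℝ} (hE : 1 ≤ E) (hK : 3 ≤ K) :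
    (K - E⁻¹) ^ ((q - 1) / (q + 1)) +
        (q - 1) / (q + 1) * E ^ (4 * q / ((q - 1) * (q + 1))) * K ^ ((q + 1) / (q - 1)) *
          (E * K - 1) ^ (2 * q / (q + 1)) ≤
      2 * q / (q + 1) *
        (K ^ (1 / q) * (1 + K ^ ((q ^ 2 + 4 * q - 1) / (q - 1) ^ 2) *
          E ^ (2 * (q + 1) / (q - 1) ^ 2))) ^ (q * (q - 1) / (q + 1)) := by
  set Y := (1 + K ^ ((q ^ 2 + 4 * q - 1) / (q - 1) ^ 2) * E ^ (2 * (q + 1) / (q - 1) ^ 2)) ^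
    (q * (q - 1) / (q + 1))
  have hq' : 0 < q - 1 := by linarith
  have hK0 : 0 < K := by linarith
  have hY : (E * K) ^ (2 * q / (q - 1)) ≤ Y :=
    mul_rpow_le_one_add_rpow hq (by linarith) (by linarith)
  have hY_large : q + 1 ≤ (q - 1) * Y := by
    rw [← div_le_iff₀' hq']
    exact (add_one_div_sub_one_le_rpow_of_three_le hq (by nlinarith)).trans hY
  have hsum : 1 + (E * K) ^ (2 * q / (q - 1)) ≤ 2 * q / (q + 1) * Y := by
    have hsplit : 2 * q / (q + 1) * Y = Y + (q - 1) * Y / (q + 1) := by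
      field_simp; ring
    have : 1 ≤ (q - 1) * Y / (q + 1) := by rw [one_le_div (by linarith)]; exact hY_large
    linarith
  have hD : (K ^ (1 / q) * (1 + K ^ ((q ^ 2 + 4 * q - 1) / (q - 1) ^ 2) *
      E ^ (2 * (q + 1) / (q - 1) ^ 2))) ^ (q * (q - 1) / (q + 1)) =
        K ^ ((q - 1) / (q + 1)) * Y := by
    have hY0 :
        0 ≤ 1 + K ^ ((q ^ 2 + 4 * q - 1) / (q - 1) ^ 2) * E ^ (2 * (q + 1) / (q - 1) ^ 2) := by
      have := rpow_nonneg hK0.le ((q ^ 2 + 4 * q - 1) / (q - 1) ^ 2)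
      have := rpow_nonneg (by linarith : (0 : ℝ) ≤ E) (2 * (q + 1) / (q - 1) ^ 2)
      positivity
    rw [mul_rpow (rpow_nonneg hK0.le _) hY0, ← rpow_mul hK0.le]
    congr 2
    field_simp
  calc _ ≤ K ^ ((q - 1) / (q + 1)) * (1 + (E * K) ^ (2 * q / (q - 1))) :=
        bracket_le hq hE (by linarith)
    _ ≤ K ^ ((q - 1) / (q + 1)) * (2 * q / (q + 1) * Y) := by gcongr
    _ = _ := by rw [hD]; ring

end

theorem stmt9_general (q : ℝ) (hq1 : 1 < q)
    (β : ℝ) (hβ : β = (q - 1) ^ 2 / (2 * (q + 1)))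
    (η : ℝ) (hη : 1 < η) (k : ℤ) (hk : 2 < k) :
    ((q + 1) / (2 * q)) ^ ((q + 1) / (q * (q - 1))) *
        (1 / ((k : ℝ) ^ (1 / q) *
          (1 + (k : ℝ) ^ ((q ^ 2 + 4 * q - 1) / (q - 1) ^ 2) *
            (η ^ β) ^ (2 * (q + 1) / (q - 1) ^ 2)))) ≤
      1 / ((((k : ℝ) - η ^ (-β)) ^ ((q - 1) / (q + 1)) +
          ((q - 1) / (q + 1)) * (η ^ β) ^ (4 * q / ((q - 1) * (q + 1))) *
            (k : ℝ) ^ ((q + 1) / (q - 1)) * (η ^ β * (k : ℝ) - 1) ^ (2 * q / (q + 1))) ^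
        ((q + 1) / (q * (q - 1)))) := by
  have hq0 : 0 < q := by linarith
  have hq' : 0 < q - 1 := by linarith
  have hE : 1 ≤ η ^ β := one_le_rpow hη.le (by rw [hβ]; positivity)
  have hK : (3 : ℝ) ≤ k := by exact_mod_cast hk
  rw [rpow_neg (by linarith),
    show (q + 1) / (2 * q) = (2 * q / (q + 1))⁻¹ from (inv_div _ _).symm]
  refine one_div_rpow_le_of_le_mul_rpow (bracket_pos hq1 hE (by linarith)) ?_ (by positivity)
    (by positivity) (by field_simp) (bracket_le_mul_rpow hq1 hE hK)
  have := rpow_nonneg (by linarith : (0 : ℝ) ≤ η ^ β) (2 * (q + 1) / (q - 1) ^ 2)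
  positivity

/-- Pointwise lower bound (5.47) used in the divergence argument. -/
theorem stmt9 (q : ℝ) (hq1 : 1 < q) (hq2 : q < 2)
    (β : ℝ) (hβ : β = (q - 1) ^ 2 / (2 * (q + 1)))
    (η : ℝ) (hη : 1 < η) (k : ℤ) (hk : 2 < k) :
    ((q + 1) / (2 * q)) ^ ((q + 1) / (q * (q - 1))) *
        (1 / ((k : ℝ) ^ (1 / q) *
          (1 + (k : ℝ) ^ ((q ^ 2 + 4 * q - 1) / (q - 1) ^ 2) *
            (η ^ β) ^ (2 * (q + 1) / (q - 1) ^ 2)))) ≤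
      1 / ((((k : ℝ) - η ^ (-β)) ^ ((q - 1) / (q + 1)) +
          ((q - 1) / (q + 1)) * (η ^ β) ^ (4 * q / ((q - 1) * (q + 1))) *
            (k : ℝ) ^ ((q + 1) / (q - 1)) * (η ^ β * (k : ℝ) - 1) ^ (2 * q / (q + 1))) ^
        ((q + 1) / (q * (q - 1)))) :=
  stmt9_general q hq1 β hβ η hη k hk
end

section
/- Let q ∈ (1,2) and define, for η ≥ 1, h̃(η) = h(2,η)^{(q+1)/(q−1)} where h(2,η) = [ (1 + ((q−1)/(q+1)) 2^{(q+1)/(q−1)}) / ( (2 − η^{−β})^{(q−1)/(q+1)} + ((q−1)/(q+1)) (η^{β})^{4q/((q−1)(q+1))} 2^{(q+1)/(q−1)} (2 η^{β} − 1)^{2q/(q+1)} ) ]^{1/q} and β = (q−1)²/(2(q+1)). Then ∫₁^∞ h̃(η) dη = +∞. -/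
/-!
For `η ≥ 1` we have `2 - η^{-β} ≤ 2` and `2η^β - 1 ≤ 2η^β`, so the denominator inside `h(2,η)` is
at most a constant times `η^{2qβ/(q-1)}`. Raising to the power `(q+1)/(q(q-1))` turns this exponent
into exactly `1` because `β = (q-1)²/(2(q+1))`, so `h̃(η) ≥ c/η` with `c > 0`, and `∫₁^∞ dη/η = ∞`.
-/

open MeasureTheory Real Set

lemma lintegral_Ici_one_ofReal_inv : ∫⁻ x in Ici (1 : ℝ), ENNReal.ofReal x⁻¹ = ⊤ := by
  by_contra h
  have hnonneg : 0 ≤ᵐ[volume.restrict (Ici (1 : ℝ))] fun x : ℝ ↦ x⁻¹ :=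
    ae_restrict_of_forall_mem measurableSet_Ici fun x hx ↦ inv_nonneg.2 (zero_le_one.trans hx)
  exact not_integrableOn_Ici_inv
    ((lintegral_ofReal_ne_top_iff_integrable measurable_inv.aestronglyMeasurable hnonneg).1 h)

lemma lintegral_Ici_one_ofReal_eq_top_of_const_mul_inv_le {f : ℝ → ℝ} {c : ℝ} (hc : 0 < c)
    (hf : ∀ x ∈ Ici (1 : ℝ), c * x⁻¹ ≤ f x) :
    ∫⁻ x in Ici (1 : ℝ), ENNReal.ofReal (f x) = ⊤ := by
  refine eq_top_iff.2 (le_trans ?_ (setLIntegral_mono' measurableSet_Ici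
    fun x hx ↦ ENNReal.ofReal_le_ofReal (hf x hx)))
  simp_rw [ENNReal.ofReal_mul hc.le]
  rw [lintegral_const_mul _ measurable_inv.ennreal_ofReal, lintegral_Ici_one_ofReal_inv,
    ENNReal.mul_top (ENNReal.ofReal_pos.2 hc).ne']

lemma div_rpow_mul_inv_le_div_rpow {N C D η A e : ℝ} (hN : 0 ≤ N) (hC : 0 < C) (hD : 0 < D)
    (hη : 0 < η) (he : 0 ≤ e) (hAe : A * e = 1) (hDle : D ≤ C * η ^ A) :
    (N / C) ^ e * η⁻¹ ≤ (N / D) ^ e := by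
  have hlhs : (N / C) ^ e * η⁻¹ = (N / (C * η ^ A)) ^ e := by
    rw [div_mul_eq_div_div, div_rpow (div_nonneg hN hC.le) (rpow_nonneg hη.le A),
      ← rpow_mul hη.le, hAe, rpow_one, div_eq_mul_inv _ η]
  rw [hlhs]
  exact rpow_le_rpow (by positivity) (div_le_div_of_nonneg_left hN hD hDle) he

lemma rpow_two_sub_rpow_neg_le_two {η β r : ℝ} (hη : 1 ≤ η) (hβ : 0 ≤ β) (hr : r ≤ 1) :
    (2 - η ^ (-β)) ^ r ≤ 2 := by
  have hlo : 1 ≤ 2 - η ^ (-β) := by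
    linarith [rpow_le_one_of_one_le_of_nonpos hη (neg_nonpos.2 hβ)]
  calc (2 - η ^ (-β)) ^ r ≤ 2 - η ^ (-β) := rpow_le_self_of_one_le hlo hr
    _ ≤ 2 := by linarith [rpow_pos_of_pos (zero_lt_one.trans_le hη) (-β)]

lemma two_mul_rpow_sub_one_rpow_le {η β s : ℝ} (hη : 1 ≤ η) (hβ : 0 ≤ β) (hs : 0 ≤ s) :
    (2 * η ^ β - 1) ^ s ≤ 2 ^ s * η ^ (β * s) := by
  have hηβ : 1 ≤ η ^ β := one_le_rpow hη hβ
  calc (2 * η ^ β - 1) ^ s ≤ (2 * η ^ β) ^ s := rpow_le_rpow (by linarith) (by linarith) hs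
    _ = 2 ^ s * η ^ (β * s) := by
      rw [mul_rpow zero_le_two (by positivity), rpow_mul (by linarith)]

noncomputable def hTwoDenom (q β η : ℝ) : ℝ :=
  (2 - η ^ (-β)) ^ ((q - 1) / (q + 1)) +
    ((q - 1) / (q + 1)) * (η ^ β) ^ (4 * q / ((q - 1) * (q + 1))) *
      (2 : ℝ) ^ ((q + 1) / (q - 1)) * (2 * η ^ β - 1) ^ (2 * q / (q + 1))

section hTwoDenom

variable {q β η : ℝ}

lemma hTwoDenom_pos (hq : 1 < q) (hβ : 0 ≤ β) (hη : 1 ≤ η) : 0 < hTwoDenom q β η := by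
  have hη0 : 0 < η := zero_lt_one.trans_le hη
  have hfirst : 1 ≤ 2 - η ^ (-β) := by
    linarith [rpow_le_one_of_one_le_of_nonpos hη (neg_nonpos.2 hβ)]
  have hsecond : 1 ≤ 2 * η ^ β - 1 := by linarith [one_le_rpow hη hβ]
  have hq' : 0 < q - 1 := sub_pos.2 hq
  unfold hTwoDenom
  positivity

lemma hTwoDenom_le (hq : 1 < q) (hβ : 0 ≤ β) (hη : 1 ≤ η) :
    hTwoDenom q β η ≤ (2 + (q - 1) / (q + 1) * 2 ^ ((q + 1) / (q - 1)) * 2 ^ (2 * q / (q + 1)))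
      * η ^ (2 * q * β / (q - 1)) := by
  have hq0 : 0 < q - 1 := sub_pos.2 hq
  have hη0 : 0 < η := zero_lt_one.trans_le hη
  have hfirst := rpow_two_sub_rpow_neg_le_two (r := (q - 1) / (q + 1)) hη hβ
    ((div_le_one (by linarith)).2 (by linarith))
  have hsecond := two_mul_rpow_sub_one_rpow_le (s := 2 * q / (q + 1)) hη hβ (by positivity)
  have hexp : β * (4 * q / ((q - 1) * (q + 1))) + β * (2 * q / (q + 1)) = 2 * q * β / (q - 1) := by
    field_simp
    ring
  have hgrowth : 1 ≤ η ^ (2 * q * β / (q - 1)) := one_le_rpow hη (by positivity)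
  calc hTwoDenom q β η
      ≤ 2 + (q - 1) / (q + 1) * η ^ (β * (4 * q / ((q - 1) * (q + 1)))) * 2 ^ ((q + 1) / (q - 1))
          * (2 ^ (2 * q / (q + 1)) * η ^ (β * (2 * q / (q + 1)))) := by
        unfold hTwoDenom
        rw [← rpow_mul hη0.le]
        gcongr
    _ = 2 + (q - 1) / (q + 1) * 2 ^ ((q + 1) / (q - 1)) * 2 ^ (2 * q / (q + 1))
          * η ^ (2 * q * β / (q - 1)) := by
        rw [← hexp, rpow_add hη0]
        ring
    _ ≤ _ := by nlinarith [show 0 ≤ (q - 1) / (q + 1) * 2 ^ ((q + 1) / (q - 1)) *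
          (2 : ℝ) ^ (2 * q / (q + 1)) * η ^ (2 * q * β / (q - 1)) by positivity]

end hTwoDenom

theorem stmt11_general (q : ℝ) (hq1 : 1 < q)
    (β : ℝ) (hβ : β = (q - 1) ^ 2 / (2 * (q + 1)))
    (h2 : ℝ → ℝ)
    (hdef : ∀ η : ℝ, h2 η =
      ((1 + ((q - 1) / (q + 1)) * (2 : ℝ) ^ ((q + 1) / (q - 1))) /
        ((2 - η ^ (-β)) ^ ((q - 1) / (q + 1)) +
          ((q - 1) / (q + 1)) * (η ^ β) ^ (4 * q / ((q - 1) * (q + 1))) *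
            (2 : ℝ) ^ ((q + 1) / (q - 1)) * (2 * η ^ β - 1) ^ (2 * q / (q + 1)))) ^ (1 / q)) :
    ∫⁻ η in Set.Ici (1 : ℝ), ENNReal.ofReal (h2 η ^ ((q + 1) / (q - 1))) = ⊤ := by
  have hq0 : 0 < q - 1 := sub_pos.2 hq1
  have hβ0 : 0 ≤ β := by rw [hβ]; positivity
  set N : ℝ := 1 + (q - 1) / (q + 1) * 2 ^ ((q + 1) / (q - 1))
  set C : ℝ := 2 + (q - 1) / (q + 1) * 2 ^ ((q + 1) / (q - 1)) * 2 ^ (2 * q / (q + 1))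
  have hN : 0 < N := by positivity
  have hexp : 2 * q * β / (q - 1) * (1 / q * ((q + 1) / (q - 1))) = 1 := by
    rw [hβ]
    field_simp
  set e : ℝ := 1 / q * ((q + 1) / (q - 1))
  refine lintegral_Ici_one_ofReal_eq_top_of_const_mul_inv_le (c := (N / C) ^ e) (by positivity)
    fun η hη ↦ ?_
  have hD := hTwoDenom_pos hq1 hβ0 hη
  have hh2 : h2 η = (N / hTwoDenom q β η) ^ (1 / q) := hdef η
  rw [hh2, ← rpow_mul (by positivity)]
  exact div_rpow_mul_inv_le_div_rpow hN.le (by positivity) hD (zero_lt_one.trans_le hη)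
    (by positivity) hexp (hTwoDenom_le hq1 hβ0 hη)

/-- (5.48): the integral `∫₁^∞ h(2,η)^{(q+1)/(q-1)} dη` diverges. -/
theorem stmt11 (q : ℝ) (hq1 : 1 < q) (hq2 : q < 2)
    (β : ℝ) (hβ : β = (q - 1) ^ 2 / (2 * (q + 1)))
    (h2 : ℝ → ℝ)
    (hdef : ∀ η : ℝ, h2 η =
      ((1 + ((q - 1) / (q + 1)) * (2 : ℝ) ^ ((q + 1) / (q - 1))) /
        ((2 - η ^ (-β)) ^ ((q - 1) / (q + 1)) +
          ((q - 1) / (q + 1)) * (η ^ β) ^ (4 * q / ((q - 1) * (q + 1))) *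
            (2 : ℝ) ^ ((q + 1) / (q - 1)) * (2 * η ^ β - 1) ^ (2 * q / (q + 1)))) ^ (1 / q)) :
    ∫⁻ η in Set.Ici (1 : ℝ), ENNReal.ofReal (h2 η ^ ((q + 1) / (q - 1))) = ⊤ :=
  stmt11_general q hq1 β hβ h2 hdef
end
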